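/- arXiv:1412.3089 — 2 statements merged into one kernel-verified Lean document; each statement's English description precedes it below -/
import Mathlib

section
/- Suppose r+1 is prime and k is a positive integer not divisible by r+1 such that (r+1)^α · k is a Schemmel nontotient number of order r for all nonnegative integers α. If k₁ and k₂ are relatively prime positive integers with k₁k₂ = k, then either (r+1)^α · k₁ is a Schemmel nontotient of order r for all nonnegative α, or (r+1)^α · k₂ is a Schemmel nontotient of order r for all nonnegative α. -/
/-- The `r`-th Schemmel totient function: multiplicative, with
`S_r(p^a) = 0` if `p ≤ r` and `S_r(p^a) = p^(a-1) * (p - r)` if `p > r`. -/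
def schemmel (r n : ℕ) : ℕ :=
  n.factorization.prod (fun p a => if p ≤ r then 0 else p ^ (a - 1) * (p - r))

/-!
If `S_r(x₁) = p^α₁ k₁` and `S_r(x₂) = p^α₂ k₂` with `p = r + 1`, then multiplicativity gives
`S_r(x₁) S_r(x₂) = S_r(lcm x₁ x₂) S_r(gcd x₁ x₂)`. Since `S_r` preserves divisibility,
`S_r(gcd x₁ x₂)` divides both values, so it is coprime to `k₁ k₂` and hence a power of `p`.
Cancelling it shows that `S_r(lcm x₁ x₂) = p^γ k₁ k₂`, contradicting the hypothesis on `k`.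
-/

open Nat

namespace ArithmeticFunction.IsMultiplicative

variable {R : Type*} [CommMonoidWithZero R] {f : ArithmeticFunction R}

theorem map_dvd_map (hf : f.IsMultiplicative)
    (hpow : ∀ {p a b : ℕ}, p.Prime → a ≤ b → f (p ^ a) ∣ f (p ^ b)) {m n : ℕ}
    (hmn : m ∣ n) : f m ∣ f n := by
  rcases eq_or_ne n 0 with rfl | hn
  · simp
  have hm : m ≠ 0 := ne_zero_of_dvd_ne_zero hn hmn
  rw [hf.multiplicative_factorization f hm, hf.multiplicative_factorization f hn,
    Finsupp.prod_of_support_subset _ (by simpa using primeFactors_mono hmn hn) _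
      (fun _ _ => by rw [pow_zero, hf.map_one])]
  exact Finset.prod_dvd_prod_of_dvd _ _ fun q hq =>
    hpow (prime_of_mem_primeFactors hq) ((factorization_le_iff_dvd hm hn).mpr hmn q)

theorem exists_map_lcm_eq_pow_mul {f : ArithmeticFunction ℕ} (hf : f.IsMultiplicative)
    (hdvd : ∀ {m n : ℕ}, m ∣ n → f m ∣ f n) {p k₁ k₂ x₁ x₂ α₁ α₂ : ℕ} (hp : p.Prime)
    (hnd : ¬ p ∣ k₁ * k₂) (hcop : k₁.Coprime k₂)
    (hx₁ : f x₁ = p ^ α₁ * k₁) (hx₂ : f x₂ = p ^ α₂ * k₂) :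
    ∃ γ, f (x₁.lcm x₂) = p ^ γ * (k₁ * k₂) := by
  have hpk₁ : p.Coprime k₁ := (hp.coprime_iff_not_dvd).mpr fun h => hnd (h.mul_right k₂)
  have hpk₂ : p.Coprime k₂ := (hp.coprime_iff_not_dvd).mpr fun h => hnd (h.mul_left k₁)
  have hgk₁ : (f (x₁.gcd x₂)).Coprime k₁ :=
    ((hpk₁.pow_left α₂).mul_left hcop.symm).coprime_dvd_left
      (hx₂ ▸ hdvd (Nat.gcd_dvd_right x₁ x₂))
  have hgk₂ : (f (x₁.gcd x₂)).Coprime k₂ :=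
    ((hpk₂.pow_left α₁).mul_left hcop).coprime_dvd_left
      (hx₁ ▸ hdvd (Nat.gcd_dvd_left x₁ x₂))
  have hprod : f (x₁.lcm x₂) * f (x₁.gcd x₂) = p ^ (α₁ + α₂) * (k₁ * k₂) := by
    rw [hf.lcm_apply_mul_gcd_apply, hx₁, hx₂, pow_add]; ring
  obtain ⟨δ, hδ, hgδ⟩ := (dvd_prime_pow hp).mp
    ((hgk₁.mul_right hgk₂).dvd_of_dvd_mul_right (hprod ▸ dvd_mul_left _ _))
  refine ⟨α₁ + α₂ - δ, Nat.eq_of_mul_eq_mul_right (pow_pos hp.pos δ) ?_⟩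
  rw [← hgδ, hprod, hgδ, mul_right_comm, ← pow_add, Nat.sub_add_cancel hδ]

end ArithmeticFunction.IsMultiplicative

section Schemmel

variable (r : ℕ)

theorem schemmel_mul {m n : ℕ} (hm : m ≠ 0) (hn : n ≠ 0) (h : m.Coprime n) :
    schemmel r (m * n) = schemmel r m * schemmel r n := by
  unfold schemmel
  rw [Nat.factorization_mul hm hn, Finsupp.prod_add_index_of_disjoint]
  rw [Nat.support_factorization, Nat.support_factorization]
  exact h.disjoint_primeFactors

theorem schemmel_prime_pow {p : ℕ} (hp : p.Prime) {a : ℕ} (ha : a ≠ 0) :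
    schemmel r (p ^ a) = if p ≤ r then 0 else p ^ (a - 1) * (p - r) := by
  unfold schemmel
  rw [hp.factorization_pow, Finsupp.prod, Finsupp.support_single _ ha]
  simp

/-- `schemmel r 0 = 1` (an empty product), so `schemmel r` is not itself an arithmetic function. -/
def schemmelArith : ArithmeticFunction ℕ :=
  ⟨fun n => if n = 0 then 0 else schemmel r n, if_pos rfl⟩

theorem schemmelArith_apply {n : ℕ} (hn : n ≠ 0) : schemmelArith r n = schemmel r n :=
  if_neg hn

theorem isMultiplicative_schemmelArith : (schemmelArith r).IsMultiplicative := by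
  refine ArithmeticFunction.IsMultiplicative.iff_ne_zero.mpr ⟨?_, fun hm hn h => ?_⟩
  · simp [schemmelArith, schemmel]
  · rw [schemmelArith_apply r (mul_ne_zero hm hn), schemmelArith_apply r hm,
      schemmelArith_apply r hn, schemmel_mul r hm hn h]

theorem schemmelArith_prime_pow_dvd {p a b : ℕ} (hp : p.Prime) (hab : a ≤ b) :
    schemmelArith r (p ^ a) ∣ schemmelArith r (p ^ b) := by
  rcases eq_or_ne a 0 with rfl | ha
  · simp [(isMultiplicative_schemmelArith r).map_one]
  rw [schemmelArith_apply r (pow_ne_zero _ hp.ne_zero),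
    schemmelArith_apply r (pow_ne_zero _ hp.ne_zero), schemmel_prime_pow r hp ha,
    schemmel_prime_pow r hp (by omega)]
  split_ifs
  · exact dvd_rfl
  · exact mul_dvd_mul_right (pow_dvd_pow p (by omega)) _

theorem schemmelArith_dvd_of_dvd {m n : ℕ} (hmn : m ∣ n) :
    schemmelArith r m ∣ schemmelArith r n :=
  (isMultiplicative_schemmelArith r).map_dvd_map (schemmelArith_prime_pow_dvd r) hmn

end Schemmel

theorem nontotient_factor_of_coprime_split_general (r k k₁ k₂ : ℕ) (hr : (r + 1).Prime)
    (hnd : ¬ (r + 1) ∣ k)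
    (h : ∀ α : ℕ, ¬ ∃ x : ℕ, 0 < x ∧ schemmel r x = (r + 1) ^ α * k)
    (hcop : Nat.Coprime k₁ k₂) (hmul : k₁ * k₂ = k) :
    (∀ α : ℕ, ¬ ∃ x : ℕ, 0 < x ∧ schemmel r x = (r + 1) ^ α * k₁) ∨
    (∀ α : ℕ, ¬ ∃ x : ℕ, 0 < x ∧ schemmel r x = (r + 1) ^ α * k₂) := by
  by_contra! hcon
  obtain ⟨⟨α₁, x₁, hx₁, hs₁⟩, α₂, x₂, hx₂, hs₂⟩ := hcon
  subst hmul
  rw [← schemmelArith_apply r hx₁.ne'] at hs₁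
  rw [← schemmelArith_apply r hx₂.ne'] at hs₂
  obtain ⟨γ, hγ⟩ := (isMultiplicative_schemmelArith r).exists_map_lcm_eq_pow_mul
    (schemmelArith_dvd_of_dvd r) hr hnd hcop hs₁ hs₂
  have hlcm : x₁.lcm x₂ ≠ 0 := (Nat.lcm_pos hx₁ hx₂).ne'
  exact h γ ⟨x₁.lcm x₂, Nat.pos_of_ne_zero hlcm, by rwa [← schemmelArith_apply r hlcm]⟩

theorem nontotient_factor_of_coprime_split (r k k₁ k₂ : ℕ) (hr : (r + 1).Prime)
    (hk : 0 < k) (hnd : ¬ (r + 1) ∣ k)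
    (h : ∀ α : ℕ, ¬ ∃ x : ℕ, 0 < x ∧ schemmel r x = (r + 1) ^ α * k)
    (hk₁ : 0 < k₁) (hk₂ : 0 < k₂) (hcop : Nat.Coprime k₁ k₂) (hmul : k₁ * k₂ = k) :
    (∀ α : ℕ, ¬ ∃ x : ℕ, 0 < x ∧ schemmel r x = (r + 1) ^ α * k₁) ∨
    (∀ α : ℕ, ¬ ∃ x : ℕ, 0 < x ∧ schemmel r x = (r + 1) ^ α * k₂) :=
  nontotient_factor_of_coprime_split_general r k k₁ k₂ hr hnd h hcop hmul
end

section
/- Let r and p be such that p is prime and S_r(x) = (r+1)^α · p for some positive integers x, α, where r+1 is prime. If p² divides x, then p − r = (r+1)^t for some nonnegative integer t ≤ α; and if p² does not divide x, then there exists a prime q dividing x such that q − r = (r+1)^t · p for some nonnegative integer t ≤ α. -/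
lemma exists_le_eq_pow_or_eq_pow_mul_of_dvd {q p d α : ℕ} (hq : q.Prime) (hp : p.Prime)
    (hd : d ∣ q ^ α * p) : ∃ t ≤ α, d = q ^ t ∨ d = q ^ t * p := by
  obtain ⟨d₁, d₂, hd₁, hd₂, rfl⟩ := dvd_mul.mp hd
  obtain ⟨t, ht, rfl⟩ := (Nat.dvd_prime_pow hq).mp hd₁
  rcases (Nat.dvd_prime hp).mp hd₂ with rfl | rfl
  · exact ⟨t, ht, Or.inl (mul_one _)⟩
  · exact ⟨t, ht, Or.inr rfl⟩

section Schemmel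

variable {r x q : ℕ}

lemma schemmel_eq_prod_primeFactors (r x : ℕ) :
    schemmel r x = ∏ q ∈ x.primeFactors,
      if q ≤ r then 0 else q ^ (x.factorization q - 1) * (q - r) := by
  rw [schemmel, Finsupp.prod, Nat.support_factorization]

lemma lt_of_mem_primeFactors_of_schemmel_ne_zero (hq : q ∈ x.primeFactors)
    (hS : schemmel r x ≠ 0) : r < q := by
  by_contra! hqr
  rw [schemmel_eq_prod_primeFactors] at hS
  exact hS (Finset.prod_eq_zero hq (if_pos hqr))

lemma pow_mul_sub_dvd_schemmel (hq : q ∈ x.primeFactors) (hS : schemmel r x ≠ 0) :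
    q ^ (x.factorization q - 1) * (q - r) ∣ schemmel r x := by
  have hqr := lt_of_mem_primeFactors_of_schemmel_ne_zero hq hS
  rw [schemmel_eq_prod_primeFactors]
  simpa only [if_neg hqr.not_ge] using
    Finset.dvd_prod_of_mem (fun q => if q ≤ r then 0 else q ^ (x.factorization q - 1) * (q - r)) hq

lemma sub_dvd_schemmel (hq : q ∈ x.primeFactors) (hS : schemmel r x ≠ 0) :
    q - r ∣ schemmel r x :=
  (dvd_mul_left _ _).trans (pow_mul_sub_dvd_schemmel hq hS)

lemma exists_mem_primeFactors_dvd_sub_of_dvd_schemmel {p : ℕ} (hp : p.Prime)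
    (hpS : p ∣ schemmel r x) (hS : schemmel r x ≠ 0) (hp2 : ¬ p ^ 2 ∣ x) :
    ∃ q ∈ x.primeFactors, p ∣ q - r := by
  rw [schemmel_eq_prod_primeFactors] at hpS
  obtain ⟨q, hq, hpq⟩ := hp.prime.exists_mem_finset_dvd hpS
  rw [if_neg (lt_of_mem_primeFactors_of_schemmel_ne_zero hq hS).not_ge] at hpq
  refine ⟨q, hq, (hp.dvd_mul.mp hpq).resolve_left fun hpow => hp2 ?_⟩
  obtain rfl : p = q := (Nat.prime_dvd_prime_iff_eq hp (Nat.prime_of_mem_primeFactors hq)).mp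
    (hp.dvd_of_dvd_pow hpow)
  have hv : x.factorization p - 1 ≠ 0 := by
    rintro hv
    rw [hv, pow_zero, Nat.dvd_one] at hpow
    exact hp.ne_one hpow
  exact (pow_dvd_pow p (by omega)).trans (Nat.ordProj_dvd x p)

end Schemmel

theorem preimage_structure_prime_pow_mul_general (r x α p : ℕ) (hr : (r + 1).Prime)
    (hp : p.Prime) (hx : 0 < x)
    (h : schemmel r x = (r + 1) ^ α * p) :
    (p ^ 2 ∣ x → ∃ t : ℕ, t ≤ α ∧ p - r = (r + 1) ^ t) ∧
    (¬ p ^ 2 ∣ x → ∃ q : ℕ, q.Prime ∧ q ∣ x ∧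
      ∃ t : ℕ, t ≤ α ∧ q - r = (r + 1) ^ t * p) := by
  have hS : schemmel r x ≠ 0 := by
    rw [h]
    exact (Nat.mul_pos (pow_pos hr.pos α) hp.pos).ne'
  constructor
  · intro hp2
    have hpx : p ∈ x.primeFactors :=
      Nat.mem_primeFactors.mpr ⟨hp, (dvd_pow_self p two_ne_zero).trans hp2, hx.ne'⟩
    obtain ⟨t, ht, hpr | hpr⟩ :=
      exists_le_eq_pow_or_eq_pow_mul_of_dvd hr hp (h ▸ sub_dvd_schemmel hpx hS)
    · exact ⟨t, ht, hpr⟩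
    · have : p ≤ (r + 1) ^ t * p := Nat.le_mul_of_pos_left p (pow_pos hr.pos t)
      have := lt_of_mem_primeFactors_of_schemmel_ne_zero hpx hS
      have := hr.two_le
      omega
  · intro hp2
    obtain ⟨q, hq, hpq⟩ :=
      exists_mem_primeFactors_dvd_sub_of_dvd_schemmel hp (h ▸ dvd_mul_left p _) hS hp2
    refine ⟨q, Nat.prime_of_mem_primeFactors hq, Nat.dvd_of_mem_primeFactors hq, ?_⟩
    obtain ⟨t, ht, hqr | hqr⟩ :=
      exists_le_eq_pow_or_eq_pow_mul_of_dvd hr hp (h ▸ sub_dvd_schemmel hq hS)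
    · rw [hqr] at hpq
      obtain rfl : p = r + 1 := (Nat.prime_dvd_prime_iff_eq hp hr).mp (hp.dvd_of_dvd_pow hpq)
      have ht0 : t ≠ 0 := by
        rintro rfl
        exact hp.ne_one (Nat.dvd_one.mp hpq)
      refine ⟨t - 1, by omega, ?_⟩
      rw [hqr, ← pow_succ, Nat.sub_add_cancel (Nat.one_le_iff_ne_zero.mpr ht0)]
    · exact ⟨t, ht, hqr⟩

theorem preimage_structure_prime_pow_mul (r x α p : ℕ) (hr : (r + 1).Prime)
    (hp : p.Prime) (hx : 0 < x) (hα : 0 < α)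
    (h : schemmel r x = (r + 1) ^ α * p) :
    (p ^ 2 ∣ x → ∃ t : ℕ, t ≤ α ∧ p - r = (r + 1) ^ t) ∧
    (¬ p ^ 2 ∣ x → ∃ q : ℕ, q.Prime ∧ q ∣ x ∧
      ∃ t : ℕ, t ≤ α ∧ q - r = (r + 1) ^ t * p) :=
  preimage_structure_prime_pow_mul_general r x α p hr hp hx h
end
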